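/- arXiv:2001.11468 — 2 statements merged into one kernel-verified Lean document; each statement's English description precedes it below -/
import Mathlib

section
/- Let ι be a type, l a nontrivial filter on ι (l ≠ ⊥), and a : ι → ℝ a net which is bounded: there exists M ∈ ℝ with |a_m| ≤ M for all m ∈ ι. Let b, C, δ ∈ ℝ with δ > 0. Assume that for every rational number t with 0 < |t| < δ one has liminf_l (t · a_m) ≥ t·b − C·t². Then a_m → b along l. -/
set_option linter.unnecessarySeqFocus false

open Filter

/-- Variational argument: if a bounded real net `a` satisfies
`liminf (t • a) ≥ t·b − C·t²` for all small nonzero rational `t`, then `a → b`. -/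
theorem tendsto_of_liminf_smul_ge
    {ι : Type*} (l : Filter ι) [l.NeBot] (a : ι → ℝ)
    (hbdd : ∃ M : ℝ, ∀ m : ι, |a m| ≤ M)
    (b C δ : ℝ) (hδ : 0 < δ)
    (h : ∀ t : ℚ, 0 < |(t : ℝ)| → |(t : ℝ)| < δ →
      (t : ℝ) * b - C * (t : ℝ) ^ 2 ≤ Filter.liminf (fun m => (t : ℝ) * a m) l) :
    Tendsto a l (nhds b) := by
  obtain ⟨M, hM⟩ := hbdd
  have hub : IsBoundedUnder (· ≤ ·) l a :=
    isBoundedUnder_of ⟨M, fun m => (abs_le.1 (hM m)).2⟩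
  have hlb : IsBoundedUnder (· ≥ ·) l a :=
    isBoundedUnder_of ⟨-M, fun m => (abs_le.1 (hM m)).1⟩
  -- key: for small rational t, get bounds on liminf/limsup of a
  have key : ∀ ε : ℝ, 0 < ε → ∃ t : ℚ, 0 < (t : ℝ) ∧ (t : ℝ) < δ ∧ C * t ≤ ε ∧
      ((t : ℝ) * b - C * (t : ℝ) ^ 2 ≤ (t : ℝ) * liminf a l) ∧
      ((-t : ℝ) * b - C * (t : ℝ) ^ 2 ≤ (-t : ℝ) * limsup a l) := by
    intro ε hε
    have hpos : (0 : ℝ) < min δ (ε / (|C| + 1)) :=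
      lt_min hδ (div_pos hε (by positivity))
    obtain ⟨t, ht0, htlt⟩ := exists_rat_btwn hpos
    have ht0' : (0 : ℝ) < (t : ℝ) := ht0
    have htδ : (t : ℝ) < δ := lt_of_lt_of_le htlt (min_le_left _ _)
    have htε : C * t ≤ ε := le_of_lt <| by
      calc C * t ≤ |C| * t := mul_le_mul_of_nonneg_right (le_abs_self C) ht0'.le
        _ ≤ (|C| + 1) * t := by nlinarith [abs_nonneg C]
        _ < (|C| + 1) * (ε / (|C| + 1)) := by
            exact mul_lt_mul_of_pos_left (lt_of_lt_of_le htlt (min_le_right _ _)) (by positivity)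
        _ = ε := by field_simp
    have habs : 0 < |(t : ℝ)| := by rwa [abs_of_pos ht0']
    have habs' : |(t : ℝ)| < δ := by rwa [abs_of_pos ht0']
    have hnabs : 0 < |((-t : ℚ) : ℝ)| := by push_cast; rwa [abs_neg]
    have hnabs' : |((-t : ℚ) : ℝ)| < δ := by push_cast; rwa [abs_neg]
    refine ⟨t, ht0', htδ, htε, ?_, ?_⟩
    · have h1 := h t habs habs'
      have heq : (fun x : ℝ => (t : ℝ) * x) (liminf a l) =
          liminf ((fun x : ℝ => (t : ℝ) * x) ∘ a) l := by
        refine Monotone.map_liminf_of_continuousAt ?_ a ?_ ?_ ?_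
        · exact fun x y hxy => mul_le_mul_of_nonneg_left hxy ht0'.le
        · exact (continuous_const.mul continuous_id).continuousAt
        · exact hub.isCoboundedUnder_ge
        · exact hlb
      simp only [Function.comp_def] at heq
      rw [← heq] at h1
      exact h1
    · have h2 := h (-t) hnabs hnabs'
      have heq : (fun x : ℝ => ((-t : ℚ) : ℝ) * x) (limsup a l) =
          liminf ((fun x : ℝ => ((-t : ℚ) : ℝ) * x) ∘ a) l := by
        refine Antitone.map_limsup_of_continuousAt ?_ a ?_ ?_ ?_
        · intro x y hxy
          have : ((-t : ℚ) : ℝ) ≤ 0 := by push_cast; linarith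
          exact mul_le_mul_of_nonpos_left hxy this
        · exact (continuous_const.mul continuous_id).continuousAt
        · exact hub
        · exact hlb.isCoboundedUnder_le
      have h2' : ((-t : ℚ) : ℝ) * b - C * ((-t : ℚ) : ℝ) ^ 2 ≤
          ((-t : ℚ) : ℝ) * limsup a l := by
        simp only [Function.comp_def] at heq
        rw [← heq] at h2
        exact h2
      push_cast at h2' ⊢
      convert h2' using 2 <;> ring
  have hinf : b ≤ liminf a l := by
    refine le_of_forall_pos_le_add fun ε hε => ?_
    obtain ⟨t, ht0, _, htε, h1, _⟩ := key ε hε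
    nlinarith [h1]
  have hsup : limsup a l ≤ b := by
    refine le_of_forall_pos_le_add fun ε hε => ?_
    obtain ⟨t, ht0, _, htε, _, h2⟩ := key ε hε
    nlinarith [h2]
  exact tendsto_of_le_liminf_of_limsup_le hinf hsup hub hlb
end

section
/- Let X be a topological space, ι a type, V : ι → Set X a family of subsets of X, and G : ι → ℝ. Let ℋ be a family of closed subsets of X, each different from all of X, such that: (a) every closed subset of X other than X itself is contained in some member of ℋ; and (b) for every H ∈ ℋ there exists i ∈ ι with V_i ⊄ H. For η ∈ ℝ let D(η) be the topological closure of the union ⋃_{i : G(i) ≤ η} V_i. Then, in the extended reals EReal, inf { η ∈ ℝ | D(η) = X } = sup_{H ∈ ℋ} inf_{i : V_i ⊄ H} G(i), with the conventions that the infimum of the empty set is +∞ and the supremum of the empty family is −∞. -/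
open Filter Set

/-- Topological core of the equivalent definition of the higher essential minimum:
the infimum (in `EReal`) of the real `η` for which the closure of the union of the `V i`
with `G i ≤ η` is all of `X` equals the sup over `H ∈ ℋ` of the inf of `G i` over those
`i` with `V i ⊄ H`. -/
theorem essential_minimum_eq_sup_inf
    {X : Type*} [TopologicalSpace X] {ι : Type*}
    (V : ι → Set X) (G : ι → ℝ) (ℋ : Set (Set X))
    (hclosed : ∀ H ∈ ℋ, IsClosed H ∧ H ≠ Set.univ)
    (ha : ∀ C : Set X, IsClosed C → C ≠ Set.univ → ∃ H ∈ ℋ, C ⊆ H)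
    (hb : ∀ H ∈ ℋ, ∃ i : ι, ¬ V i ⊆ H) :
    (⨅ (η : ℝ) (_ : closure (⋃ (i : ι) (_ : G i ≤ η), V i) = Set.univ), (η : EReal)) =
      ⨆ H ∈ ℋ, ⨅ (i : ι) (_ : ¬ V i ⊆ H), (G i : EReal) := by
  apply le_antisymm
  · -- LHS ≤ RHS : use that for all real z > RHS, D(z) = univ
    rw [← EReal.le_of_forall_lt_iff_le]
    intro z hz
    have hD : closure (⋃ (i : ι) (_ : G i ≤ z), V i) = Set.univ := by
      by_contra hne
      obtain ⟨H, hH, hsub⟩ := ha _ isClosed_closure hne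
      have : (z : EReal) ≤ ⨅ (i : ι) (_ : ¬ V i ⊆ H), (G i : EReal) := by
        refine le_iInf fun i ↦ le_iInf fun hiH ↦ ?_
        by_contra hlt
        push_neg at hlt
        have hGz : G i ≤ z := by exact_mod_cast hlt.le
        exact hiH fun x hx => hsub (subset_closure (Set.mem_iUnion₂.2 ⟨i, hGz, hx⟩))
      have : (z : EReal) ≤ ⨆ H ∈ ℋ, ⨅ (i : ι) (_ : ¬ V i ⊆ H), (G i : EReal) :=
        this.trans (le_iSup₂ (f := fun H _ => ⨅ (i : ι) (_ : ¬ V i ⊆ H), (G i : EReal)) H hH)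
      exact absurd (hz.trans_le this) (lt_irrefl _)
    exact iInf₂_le z hD
  · -- RHS ≤ LHS
    refine iSup₂_le fun H hH ↦ le_iInf₂ fun η hη ↦ ?_
    obtain ⟨hHc, hHne⟩ := hclosed H hH
    -- there is i with G i ≤ η and ¬ V i ⊆ H
    have : ∃ i, G i ≤ η ∧ ¬ V i ⊆ H := by
      by_contra hcon
      push_neg at hcon
      have : closure (⋃ (i : ι) (_ : G i ≤ η), V i) ⊆ H := by
        refine (IsClosed.closure_subset_iff hHc).2 ?_
        exact Set.iUnion₂_subset fun i hi => hcon i hi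
      rw [hη] at this
      exact hHne (Set.univ_subset_iff.1 this)
    obtain ⟨i, hGi, hiH⟩ := this
    exact (iInf₂_le i hiH).trans (by exact_mod_cast hGi)
end
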